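/- Let S ⊆ 𝒟 be a nonempty finite set and F = F_S. Assume the second-moment bound (1/|S|) Σ_{x∈S} ‖∇ℓ(w,x)‖² ≤ M + M_G‖∇F(w)‖² holds for all w ∈ H. Then for every w ∈ H, the expected loss after one SGD step with a uniformly sampled data point satisfies (1/|S|) Σ_{x∈S} F(w − α∇ℓ(w,x)) ≤ F(w) − γ‖∇F(w)‖² + α²LM/2, where γ = α(1 − (1/2)αLM_G). -/

import Mathlib

/-!
The average of the `L`-Lipschitz gradients `∇ℓ(·, x)` is `∇F`, which is therefore `L`-Lipschitz
too, so `F` obeys the descent lemma `F (w + d) ≤ F w + ⟪∇F w, d⟫ + L/2 ‖d‖²`. Averaging it over the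
steps `d = -α ∇ℓ(w, x)`, the linear terms average to `-α ‖∇F w‖²` (the stochastic gradient is
unbiased) and the quadratic terms are controlled by the second-moment bound.
-/

open Finset InnerProductSpace

/-- Empirical loss of `ℓ` over the finite set `S`: `F_S(w) = (1/|S|) ∑_{x ∈ S} ℓ(w, x)`. -/
noncomputable def empLoss {H 𝒟 : Type*} (ℓ : H → 𝒟 → ℝ) (S : Finset 𝒟) (w : H) : ℝ :=
  (S.card : ℝ)⁻¹ * ∑ x ∈ S, ℓ w x

section Descent

variable {H : Type*} [NormedAddCommGroup H] [InnerProductSpace ℝ H] [CompleteSpace H]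

theorem descent_lemma {f : H → ℝ} {L : ℝ} (hf : Differentiable ℝ f)
    (hlip : ∀ w u, ‖gradient f w - gradient f u‖ ≤ L * ‖w - u‖) (w d : H) :
    f (w + d) ≤ f w + ⟪gradient f w, d⟫_ℝ + L / 2 * ‖d‖ ^ 2 := by
  -- The claim is `ψ 1 ≤ ψ 0`; the Lipschitz bound makes `ψ' ≤ 0`, so `ψ` is antitone on `[0, ∞)`.
  set ψ : ℝ → ℝ := fun t => f (w + t • d) - t * ⟪gradient f w, d⟫_ℝ - L / 2 * t ^ 2 * ‖d‖ ^ 2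
  set ψ' : ℝ → ℝ := fun t =>
    ⟪gradient f (w + t • d) - gradient f w, d⟫_ℝ - L * t * ‖d‖ ^ 2
  have hψ : ∀ t, HasDerivAt ψ (ψ' t) t := by
    intro t
    have hline : HasDerivAt (fun t : ℝ => w + t • d) d t := by
      simpa using ((hasDerivAt_id t).smul_const d).const_add w
    have hf_line := (hf (w + t • d)).hasGradientAt.hasFDerivAt.comp_hasDerivAt t hline
    refine ((hf_line.sub ((hasDerivAt_id t).mul_const ⟪gradient f w, d⟫_ℝ)).sub
      (((hasDerivAt_pow 2 t).const_mul (L / 2)).mul_const (‖d‖ ^ 2))).congr_deriv ?_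
    simp only [ψ', inner_sub_left, toDual_apply_apply]
    ring
  have hψ'_nonpos : ∀ t, 0 ≤ t → ψ' t ≤ 0 := by
    intro t ht
    have hgrad : ‖gradient f (w + t • d) - gradient f w‖ ≤ L * (t * ‖d‖) := by
      simpa [norm_smul, abs_of_nonneg ht] using hlip (w + t • d) w
    have hinner := (real_inner_le_norm _ d).trans (mul_le_mul_of_nonneg_right hgrad (norm_nonneg d))
    simp only [ψ']
    linarith [show L * (t * ‖d‖) * ‖d‖ = L * t * ‖d‖ ^ 2 by ring]
  have hanti : AntitoneOn ψ (Set.Ici 0) :=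
    antitoneOn_of_hasDerivWithinAt_nonpos (convex_Ici 0)
      (fun t _ => (hψ t).continuousAt.continuousWithinAt) (fun t _ => (hψ t).hasDerivWithinAt)
      (fun t ht => hψ'_nonpos t (interior_subset ht))
  have hψ10 := hanti Set.self_mem_Ici (Set.mem_Ici.2 zero_le_one) zero_le_one
  simp only [ψ, one_smul, zero_smul, add_zero, one_mul, zero_mul, one_pow, sub_zero] at hψ10
  linarith

section EmpiricalLoss

variable {𝒟 : Type*} {ℓ : H → 𝒟 → ℝ} {S : Finset 𝒟}

theorem hasGradientAt_empLoss {w : H}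
    (hdiff : ∀ x ∈ S, DifferentiableAt ℝ (fun v => ℓ v x) w) :
    HasGradientAt (empLoss ℓ S) ((S.card : ℝ)⁻¹ • ∑ x ∈ S, gradient (fun v => ℓ v x) w) w := by
  rw [hasGradientAt_iff_hasFDerivAt, map_smul, map_sum]
  exact (HasFDerivAt.fun_sum fun x hx => (hdiff x hx).hasGradientAt.hasFDerivAt).const_mul _

theorem differentiable_empLoss (hdiff : ∀ x ∈ S, Differentiable ℝ (fun v => ℓ v x)) :
    Differentiable ℝ (empLoss ℓ S) :=
  fun w => (hasGradientAt_empLoss fun x hx => hdiff x hx w).differentiableAt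

theorem gradient_empLoss (hdiff : ∀ x, Differentiable ℝ (fun v => ℓ v x)) (w : H) :
    gradient (empLoss ℓ S) w = (S.card : ℝ)⁻¹ • ∑ x ∈ S, gradient (fun v => ℓ v x) w :=
  (hasGradientAt_empLoss fun x _ => hdiff x w).gradient

theorem norm_gradient_empLoss_sub_le {L : ℝ} (hS : S.Nonempty)
    (hdiff : ∀ x, Differentiable ℝ (fun v => ℓ v x))
    (hlip : ∀ x ∈ S, ∀ w u : H,
      ‖gradient (fun v => ℓ v x) w - gradient (fun v => ℓ v x) u‖ ≤ L * ‖w - u‖)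
    (w u : H) :
    ‖gradient (empLoss ℓ S) w - gradient (empLoss ℓ S) u‖ ≤ L * ‖w - u‖ := by
  have hcard : (0 : ℝ) < S.card := by exact_mod_cast hS.card_pos
  rw [gradient_empLoss hdiff, gradient_empLoss hdiff, ← smul_sub, ← sum_sub_distrib, norm_smul,
    norm_inv, Real.norm_natCast, inv_mul_le_iff₀ hcard]
  calc ‖∑ x ∈ S, (gradient (fun v => ℓ v x) w - gradient (fun v => ℓ v x) u)‖
      ≤ ∑ x ∈ S, L * ‖w - u‖ := norm_sum_le_of_le S fun x hx => hlip x hx w u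
    _ = S.card * (L * ‖w - u‖) := by rw [sum_const, nsmul_eq_mul]

theorem inv_card_mul_sum_inner_gradient_empLoss
    (hdiff : ∀ x, Differentiable ℝ (fun v => ℓ v x)) (w : H) :
    (S.card : ℝ)⁻¹ * ∑ x ∈ S, ⟪gradient (empLoss ℓ S) w, gradient (fun v => ℓ v x) w⟫_ℝ
      = ‖gradient (empLoss ℓ S) w‖ ^ 2 := by
  rw [← inner_sum, ← real_inner_smul_right, ← gradient_empLoss hdiff, real_inner_self_eq_norm_sq]

end EmpiricalLoss

end Descent

theorem sgd_one_step_descent_general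
    {H 𝒟 : Type*} [NormedAddCommGroup H] [InnerProductSpace ℝ H] [CompleteSpace H]
    (ℓ : H → 𝒟 → ℝ) (L M MG α γ : ℝ)
    (hL : 0 < L)
    (hγ : γ = α * (1 - α * L * MG / 2))
    (hdiff : ∀ x : 𝒟, Differentiable ℝ (fun w => ℓ w x))
    (hLip : ∀ (x : 𝒟) (w u : H),
      ‖gradient (fun v => ℓ v x) w - gradient (fun v => ℓ v x) u‖ ≤ L * ‖w - u‖)
    (S : Finset 𝒟) (hS : S.Nonempty)
    (hsecond : ∀ w : H,
      (S.card : ℝ)⁻¹ * ∑ x ∈ S, ‖gradient (fun v => ℓ v x) w‖ ^ 2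
        ≤ M + MG * ‖gradient (empLoss ℓ S) w‖ ^ 2)
    (w : H) :
    (S.card : ℝ)⁻¹ * ∑ x ∈ S, empLoss ℓ S (w - α • gradient (fun v => ℓ v x) w)
      ≤ empLoss ℓ S w - γ * ‖gradient (empLoss ℓ S) w‖ ^ 2 + α ^ 2 * L * M / 2 := by
  set F := empLoss ℓ S
  set G := gradient F w
  set g : 𝒟 → H := fun x => gradient (fun v => ℓ v x) w
  have hstep : ∀ x ∈ S, F (w - α • g x) ≤ F w - α * ⟪G, g x⟫_ℝ + L * α ^ 2 / 2 * ‖g x‖ ^ 2 := by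
    intro x _
    have hdescent := descent_lemma (differentiable_empLoss fun x _ => hdiff x)
      (norm_gradient_empLoss_sub_le hS hdiff fun x _ => hLip x) w (-(α • g x))
    rw [← sub_eq_add_neg, inner_neg_right, real_inner_smul_right, norm_neg, norm_smul, mul_pow,
      Real.norm_eq_abs, sq_abs] at hdescent
    linarith
  have hcard : (0 : ℝ) < S.card := by exact_mod_cast hS.card_pos
  calc (S.card : ℝ)⁻¹ * ∑ x ∈ S, F (w - α • g x)
      ≤ (S.card : ℝ)⁻¹ * ∑ x ∈ S, (F w - α * ⟪G, g x⟫_ℝ + L * α ^ 2 / 2 * ‖g x‖ ^ 2) := by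
        gcongr with x hx; exact hstep x hx
    _ = F w - α * ((S.card : ℝ)⁻¹ * ∑ x ∈ S, ⟪G, g x⟫_ℝ)
          + L * α ^ 2 / 2 * ((S.card : ℝ)⁻¹ * ∑ x ∈ S, ‖g x‖ ^ 2) := by
        rw [sum_add_distrib, sum_sub_distrib, sum_const, nsmul_eq_mul, ← mul_sum, ← mul_sum]
        field_simp
    _ ≤ F w - α * ‖G‖ ^ 2 + L * α ^ 2 / 2 * (M + MG * ‖G‖ ^ 2) := by
        rw [inv_card_mul_sum_inner_gradient_empLoss hdiff]
        gcongr
        exact hsecond w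
    _ = F w - γ * ‖G‖ ^ 2 + α ^ 2 * L * M / 2 := by rw [hγ]; ring

/-- One-step expected descent for SGD with a uniformly sampled data point:
if the second-moment bound holds, then
`E[F(w − α∇ℓ(w,ξ))] ≤ F(w) − γ‖∇F(w)‖² + α²LM/2` with `γ = α(1 − (1/2)αLM_G)`. -/
theorem sgd_one_step_descent
    {H 𝒟 : Type*} [NormedAddCommGroup H] [InnerProductSpace ℝ H] [CompleteSpace H]
    (ℓ : H → 𝒟 → ℝ) (L M MG α γ : ℝ)
    (hL : 0 < L) (hM : 0 ≤ M) (hMG : 1 ≤ MG)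
    (hα : 0 < α) (hα2 : α ≤ 2 / (L * MG))
    (hγ : γ = α * (1 - α * L * MG / 2))
    (hdiff : ∀ x : 𝒟, Differentiable ℝ (fun w => ℓ w x))
    (hLip : ∀ (x : 𝒟) (w u : H),
      ‖gradient (fun v => ℓ v x) w - gradient (fun v => ℓ v x) u‖ ≤ L * ‖w - u‖)
    (S : Finset 𝒟) (hS : S.Nonempty)
    (hsecond : ∀ w : H,
      (S.card : ℝ)⁻¹ * ∑ x ∈ S, ‖gradient (fun v => ℓ v x) w‖ ^ 2
        ≤ M + MG * ‖gradient (empLoss ℓ S) w‖ ^ 2)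
    (w : H) :
    (S.card : ℝ)⁻¹ * ∑ x ∈ S, empLoss ℓ S (w - α • gradient (fun v => ℓ v x) w)
      ≤ empLoss ℓ S w - γ * ‖gradient (empLoss ℓ S) w‖ ^ 2 + α ^ 2 * L * M / 2 :=
  sgd_one_step_descent_general ℓ L M MG α γ hL hγ hdiff hLip S hS hsecond w
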